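/- Markov chain for the auxiliary variable in the Mode 2 converse: Let {(X_i, Y_i, V_i)}_{i=1}^n be i.i.d. copies of a finite-valued tuple (X,Y,V), let M := f(V_1,…,V_n) for an arbitrary function f, and define A_i := (M, Y_1^{i−1}, Y_{i+1}^n, V_1^{i−1}). Then for each i = 1,…,n the Markov chain (X_i, Y_i) ↔ V_i ↔ A_i holds; that is, (X_i,Y_i) is conditionally independent of A_i given V_i. -/

import Mathlib

open scoped Classical BigOperators

/-! Under the i.i.d. law the `i`-th letter is independent of the others, and `A_i` reads the
`i`-th letter only through `V_i` (`M = f(V^n)`, and the `Y`, `V` blocks skip index `i`). Given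
`V_i`, a function of `V_i` and of an independent block is independent of `(X_i, Y_i)`. -/

/-- `p` is a probability mass function on the finite alphabet `α`. -/
def IsPMF {α : Type*} [Fintype α] (p : α → ℝ) : Prop :=
  (∀ a, 0 ≤ p a) ∧ ∑ a, p a = 1

/-- Pushforward of a pmf along a map. -/
noncomputable def pushPMF {α β : Type*} [Fintype α] (p : α → ℝ) (f : α → β) : β → ℝ :=
  fun b => ∑ a, if f a = b then p a else 0

/-- Shannon entropy (in bits) of a pmf. -/
noncomputable def ent {α : Type*} [Fintype α] (p : α → ℝ) : ℝ :=
  ∑ a, -(p a * Real.logb 2 (p a))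

/-- Mutual information `I(A;B)` of a joint pmf on `α × β`. -/
noncomputable def mutInfo {α β : Type*} [Fintype α] [Fintype β] (p : α × β → ℝ) : ℝ :=
  ent (pushPMF p Prod.fst) + ent (pushPMF p Prod.snd) - ent p

/-- `B ↔ C ↔ D` is a Markov chain under the pmf `p` on `Ω`: `B` and `D` are conditionally
independent given `C`, i.e. `P(b,c,d)·P(c) = P(b,c)·P(c,d)` for all `b, c, d`. -/
def MarkovChain {Ω β γ δ : Type*} [Fintype Ω] (p : Ω → ℝ)
    (B : Ω → β) (C : Ω → γ) (D : Ω → δ) : Prop :=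
  ∀ (b : β) (c : γ) (d : δ),
    pushPMF p (fun ω => (B ω, C ω, D ω)) (b, c, d) * pushPMF p C c
      = pushPMF p (fun ω => (B ω, C ω)) (b, c) * pushPMF p (fun ω => (C ω, D ω)) (c, d)

section IID

variable {𝒳 𝒴 𝒱 ℳ : Type} [Fintype 𝒳] [Fintype 𝒴] [Fintype 𝒱] [Fintype ℳ]

/-- The i.i.d. pmf of `n` copies of the single-letter source `p` on `𝒳 × 𝒴 × 𝒱`. -/
noncomputable def iidPMF (p : 𝒳 × 𝒴 × 𝒱 → ℝ) (n : ℕ) : (Fin n → 𝒳 × 𝒴 × 𝒱) → ℝ :=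
  fun s => ∏ i, p (s i)

section ProductMarkov

variable {Ω Ω' α β β' γ δ : Type*} [Fintype Ω] [Fintype Ω'] [Fintype α] [Fintype β]

theorem pushPMF_comp_equiv (e : Ω' ≃ Ω) (p : Ω → ℝ) {ε : Type*} (F : Ω → ε) :
    pushPMF (p ∘ e) (F ∘ e) = pushPMF p F :=
  funext fun _ => Fintype.sum_equiv e _ _ fun _ => rfl

theorem MarkovChain.comp_equiv {p : Ω → ℝ} {B : Ω → β'} {C : Ω → γ} {D : Ω → δ}
    (h : MarkovChain p B C D) (e : Ω' ≃ Ω) :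
    MarkovChain (p ∘ e) (B ∘ e) (C ∘ e) (D ∘ e) := fun b c d => by
  have hbcd := h b c d
  simp only [← pushPMF_comp_equiv e p] at hbcd
  exact hbcd

theorem pushPMF_prod_of_iff (u : α → ℝ) (w : β → ℝ) {ε : Type*} {F : α × β → ε} {y : ε}
    (P : α → Prop) (Q : β → Prop) (hF : ∀ a t, F (a, t) = y ↔ P a ∧ Q t) :
    pushPMF (fun x => u x.1 * w x.2) F y
      = (∑ a, if P a then u a else 0) * ∑ t, if Q t then w t else 0 := by
  simp only [pushPMF, Fintype.sum_prod_type, hF, Finset.sum_mul_sum, ite_zero_mul_ite_zero]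

-- On `{C = c}` the event `{D = d}` is `Dc` for any choice of the witness `a` (by `hD`), so the
-- events involved are rectangles and their masses factor.
theorem markovChain_prod (u : α → ℝ) (w : β → ℝ) (B : α → β') (C : α → γ) (D : α × β → δ)
    (hD : ∀ a a' t, C a = C a' → D (a, t) = D (a', t)) :
    MarkovChain (fun x => u x.1 * w x.2) (fun x => B x.1) (fun x => C x.1) D := by
  intro b c d
  let Dc : β → Prop := fun t => ∃ a, C a = c ∧ D (a, t) = d
  have hDc : ∀ a t, C a = c → (D (a, t) = d ↔ Dc t) := fun a t hc =>
    ⟨fun h => ⟨a, hc, h⟩, fun ⟨a', hc', h⟩ => (hD a a' t (hc.trans hc'.symm)).trans h⟩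
  rw [pushPMF_prod_of_iff u w (fun a => B a = b ∧ C a = c) Dc fun a t => by
      simp only [Prod.mk.injEq, and_assoc]
      exact and_congr_right fun _ => and_congr_right fun hc => hDc a t hc,
    pushPMF_prod_of_iff u w (F := fun x => C x.1) (y := c) (fun a => C a = c) (fun _ => True)
      fun _ _ => (and_true _).symm.to_iff,
    pushPMF_prod_of_iff u w (fun a => B a = b ∧ C a = c) (fun _ => True) fun _ _ => by
      simp only [Prod.mk.injEq, and_true],
    pushPMF_prod_of_iff u w (fun a => C a = c) Dc fun a t => by
      simp only [Prod.mk.injEq]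
      exact and_congr_right fun hc => hDc a t hc]
  ring

theorem markovChain_pi {ι E : Type*} [Fintype ι] [DecidableEq ι] [Fintype E] (q : ι → E → ℝ)
    (i : ι) (B : E → β') (C : E → γ) (D : (ι → E) → δ)
    (hD : ∀ s s', C (s i) = C (s' i) → (∀ j ≠ i, s j = s' j) → D s = D s') :
    MarkovChain (fun s => ∏ j, q j (s j)) (fun s => B (s i)) (fun s => C (s i)) D := by
  let e := Equiv.funSplitAt i E
  have hprod : (fun s : ι → E => ∏ j, q j (s j))
      = (fun x => q i x.1 * ∏ j : {j // j ≠ i}, q j (x.2 j)) ∘ e := by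
    funext s
    rw [Function.comp_apply, Fintype.prod_eq_mul_prod_compl i]
    exact congrArg _ (Finset.prod_subtype _ (by simp) _)
  have hsplit := (markovChain_prod (q i) (fun t => ∏ j : {j // j ≠ i}, q j (t j)) B C
    (D ∘ e.symm) fun a a' t hc =>
      hD _ _ (by simpa [e] using hc) fun j hj => by simp [e, hj]).comp_equiv e
  rwa [← hprod, Function.comp_assoc, e.symm_comp_self, Function.comp_id] at hsplit

end ProductMarkov

theorem mode2_converse_aux_markov_general
    (p : 𝒳 × 𝒴 × 𝒱 → ℝ) (n : ℕ)
    (f : (Fin n → 𝒱) → ℳ) :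
    ∀ i : Fin n,
      MarkovChain (iidPMF p n)
        (fun s => ((s i).1, (s i).2.1))
        (fun s => (s i).2.2)
        (fun s => (f (fun j => (s j).2.2),
          fun j : Fin n => if (j : ℕ) < (i : ℕ) then some ((s j).2.1) else none,
          fun j : Fin n => if (i : ℕ) < (j : ℕ) then some ((s j).2.1) else none,
          fun j : Fin n => if (j : ℕ) < (i : ℕ) then some ((s j).2.2) else none)) := by
  intro i
  refine markovChain_pi (fun _ => p) i (fun a => (a.1, a.2.1)) (fun a => a.2.2) _
    fun s s' hVi hrest => ?_
  have hV : (fun j => (s j).2.2) = fun j => (s' j).2.2 := funext fun j => by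
    by_cases hj : j = i
    · subst hj; exact hVi
    · rw [hrest j hj]
  simp only [hV, Prod.mk.injEq, true_and]
  refine ⟨funext fun j => ?_, funext fun j => ?_, funext fun j => ?_⟩ <;> split_ifs with h <;>
    first | rfl | rw [hrest j (Fin.ne_of_val_ne (by omega))]

/-- Markov chain for the auxiliary variable in the Mode 2 converse: for
i.i.d. `{(X_i,Y_i,V_i)}`, `M := f(V_1,…,V_n)` and
`A_i := (M, Y_1^{i−1}, Y_{i+1}^n, V_1^{i−1})`, the Markov chain `(X_i,Y_i) ↔ V_i ↔ A_i`
holds for each `i`. -/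
theorem mode2_converse_aux_markov
    (p : 𝒳 × 𝒴 × 𝒱 → ℝ) (hp : IsPMF p) (n : ℕ)
    (f : (Fin n → 𝒱) → ℳ) :
    ∀ i : Fin n,
      MarkovChain (iidPMF p n)
        (fun s => ((s i).1, (s i).2.1))
        (fun s => (s i).2.2)
        (fun s => (f (fun j => (s j).2.2),
          fun j : Fin n => if (j : ℕ) < (i : ℕ) then some ((s j).2.1) else none,
          fun j : Fin n => if (i : ℕ) < (j : ℕ) then some ((s j).2.1) else none,
          fun j : Fin n => if (j : ℕ) < (i : ℕ) then some ((s j).2.2) else none)) :=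
  mode2_converse_aux_markov_general p n f

end IID
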